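/- For every admissible word (ε_1,…,ε_n) with n ≥ 1, the length of the basic interval satisfies β^{−(n+Γ_n+1)} ≤ |I(ε_1,…,ε_n)| ≤ β^{−n}; in particular, for the word (ε*_1,…,ε*_n) one has the sharper bounds β^{−(n+t_n+1)} ≤ |I(ε*_1,…,ε*_n)| ≤ β^{−(n+t_n)}. -/

import Mathlib

open MeasureTheory Filter Set

noncomputable section

/-- The β-transformation on `(0,1]`: `T_β x = βx − ⌈βx⌉ + 1`. -/
def Tbeta (β x : ℝ) : ℝ := β * x - ⌈β * x⌉ + 1

/-- The digits of the β-expansion, 0-indexed: `eps β x n` is the `(n+1)`-st digit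
`ε_{n+1}(x,β) = ⌈β T_β^n x⌉ − 1`. -/
def eps (β x : ℝ) (n : ℕ) : ℤ := ⌈β * (Tbeta β)^[n] x⌉ - 1

/-- The basic interval of order `n` containing `x`:
all `y ∈ (0,1]` whose first `n` digits agree with those of `x`. -/
def In (β x : ℝ) (n : ℕ) : Set ℝ := {y ∈ Ioc (0:ℝ) 1 | ∀ j < n, eps β y j = eps β x j}

/-- The length of a set (Lebesgue measure). -/
def len (s : Set ℝ) : ℝ := (volume s).toReal

/-- `tseq β n = t_n`: the maximal length of the block of zero digits of the
β-expansion of `1` immediately following position `n` (digits `ε*_{n+1},…,ε*_{n+k}`). -/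
def tseq (β : ℝ) (n : ℕ) : ℕ := sSup {k : ℕ | ∀ j < k, eps β 1 (n + j) = 0}

/-- `Gam β n = Γ_n = max_{1 ≤ k ≤ n} t_k`. -/
def Gam (β : ℝ) (n : ℕ) : ℕ := Finset.sup (Finset.Icc 1 n) (tseq β)

/-- `lam β = λ(β) = limsup_n Γ_n / n`. -/
def lam (β : ℝ) : ℝ := Filter.limsup (fun n : ℕ => (Gam β n : ℝ) / n) atTop

/-- `kstar β x n = k_n^*(x)`: the smallest `k ≥ 0` such that
`(ε_{k+1}(x),…,ε_n(x)) = (ε*_1,…,ε*_{n−k})`. -/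
def kstar (β x : ℝ) (n : ℕ) : ℕ := sInf {k : ℕ | ∀ i < n - k, eps β x (k + i) = eps β 1 i}

/-- `tau β x = τ(x) = limsup_n t_{n − k_n^*(x)} / n`. -/
def tau (β x : ℝ) : ℝ :=
  Filter.limsup (fun n : ℕ => (tseq β (n - kstar β x n) : ℝ) / n) atTop

/-- The upper density `\overline{D}(x) = limsup_n (−log_β |I_n(x)|)/n`. -/
def upperD (β x : ℝ) : ℝ :=
  Filter.limsup (fun n : ℕ => -Real.logb β (len (In β x n)) / n) atTop

/-- The lower density `\underline{D}(x) = liminf_n (−log_β |I_n(x)|)/n`. -/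
def lowerD (β x : ℝ) : ℝ :=
  Filter.liminf (fun n : ℕ => -Real.logb β (len (In β x n)) / n) atTop

/-- The basic interval (cylinder) associated to a finite word `w` of digits:
all `x ∈ (0,1]` whose β-expansion starts with `w`. -/
def cyl (β : ℝ) (w : List ℤ) : Set ℝ :=
  {x ∈ Ioc (0:ℝ) 1 | ∀ j < w.length, eps β x j = w.getD j 0}

/-- A finite word is admissible if it occurs as the initial digits of some `x ∈ (0,1]`. -/
def Admissible (β : ℝ) (w : List ℤ) : Prop := (cyl β w).Nonempty

/-- A basic interval is full if its length is `β^{−n}` where `n` is the order. -/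
def IsFull (β : ℝ) (w : List ℤ) : Prop := len (cyl β w) = β ^ (-(w.length : ℤ))

/-- The word `(ε*_1,…,ε*_n)` of the first `n` digits of the β-expansion of `1`. -/
def estarWord (β : ℝ) (n : ℕ) : List ℤ := (List.range n).map (eps β 1)

/-- The interior of a set relative to the subspace `[0,1]`
(for `S ⊆ [0,1]` this is exactly the interior of `S` in the topology of `[0,1]`). -/
def intIn01 (S : Set ℝ) : Set ℝ := Icc 0 1 \ closure (Icc 0 1 \ S)

/-! On a cylinder of order `n` the map `T_β^n` is affine with slope `β^n` and values in `(0,1]`,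
and conversely any point whose first `n` affine images stay in `(0,1]` lies in the cylinder.
Hence a cylinder with right endpoint `x` is `(x - T^n x / β^n, x]`, of length `T^n x / β^n`.
Maximality of `x` forces `T^j x = 1` for some `j ≤ n`, so `T^n x = T^{n-j} 1`; and `t_m` is exactly
the largest `k` with `β^k T^m 1 ≤ 1`, which bounds `T^{n-j} 1` from below by `β^{-(Γ_n+1)}`. -/

open Topology

section

variable {β x : ℝ}

lemma Tbeta_mem_Ioc (β x : ℝ) : Tbeta β x ∈ Ioc (0 : ℝ) 1 := by
  unfold Tbeta
  constructor <;> linarith [Int.ceil_lt_add_one (β * x), Int.le_ceil (β * x)]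

lemma iterate_Tbeta_mem_Ioc (β : ℝ) (hx : x ∈ Ioc (0 : ℝ) 1) :
    ∀ n, (Tbeta β)^[n] x ∈ Ioc (0 : ℝ) 1
  | 0 => hx
  | n + 1 => by rw [Function.iterate_succ_apply']; exact Tbeta_mem_Ioc β _

lemma eps_iterate (β x : ℝ) (m j : ℕ) : eps β ((Tbeta β)^[m] x) j = eps β x (j + m) := by
  rw [eps, eps, Function.iterate_add_apply]

lemma eps_eq_eps_iterate (β x : ℝ) (j : ℕ) : eps β x j = eps β ((Tbeta β)^[j] x) 0 := by
  rw [eps_iterate, zero_add]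

lemma Tbeta_eq_sub_eps (β x : ℝ) : Tbeta β x = β * x - eps β x 0 := by
  simp only [Tbeta, eps, Function.iterate_zero_apply, Int.cast_sub, Int.cast_one]
  ring

lemma eps_zero_eq_iff {e : ℤ} : eps β x 0 = e ↔ β * x - e ∈ Ioc (0 : ℝ) 1 := by
  rw [eps, Function.iterate_zero_apply, sub_eq_iff_eq_add, Int.ceil_eq_iff, mem_Ioc]
  push_cast
  constructor <;> rintro ⟨h₁, h₂⟩ <;> constructor <;> linarith

lemma cyl_nil (β : ℝ) : cyl β [] = Ioc 0 1 := by
  ext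
  simp [cyl]

lemma cyl_subset_Ioc (β : ℝ) (w : List ℤ) : cyl β w ⊆ Ioc 0 1 := fun _ hx => hx.1

lemma Tbeta_eq_of_eps_zero_eq {e : ℤ} (h : eps β x 0 = e) : Tbeta β x = β * x - e := by
  rw [Tbeta_eq_sub_eps, h]

lemma mem_cyl_cons {e : ℤ} {w : List ℤ} :
    x ∈ cyl β (e :: w) ↔ x ∈ Ioc (0 : ℝ) 1 ∧ β * x - e ∈ cyl β w := by
  simp only [cyl, mem_ofPred_eq, List.length_cons, Nat.forall_lt_succ_left, List.getD_cons_zero,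
    List.getD_cons_succ]
  constructor
  · rintro ⟨hx, h₀, hw⟩
    rw [← Tbeta_eq_of_eps_zero_eq h₀]
    exact ⟨hx, Tbeta_mem_Ioc β x, fun j hj => by simpa [← eps_iterate] using hw j hj⟩
  · rintro ⟨hx, hTx, hw⟩
    have h₀ : eps β x 0 = e := eps_zero_eq_iff.2 hTx
    rw [← Tbeta_eq_of_eps_zero_eq h₀] at hw
    exact ⟨hx, h₀, fun j hj => by simpa [← eps_iterate] using hw j hj⟩

lemma Tbeta_eq_of_mem_cyl_cons {e : ℤ} {w : List ℤ} (hx : x ∈ cyl β (e :: w)) :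
    Tbeta β x = β * x - e :=
  Tbeta_eq_of_eps_zero_eq (by simpa using hx.2 0 (by simp))

lemma exists_cyl_eq_Ioc (hβ : 0 < β) : ∀ w : List ℤ, ∃ a b, cyl β w = Ioc a b
  | [] => ⟨0, 1, cyl_nil β⟩
  | e :: w => by
    obtain ⟨a, b, hw⟩ := exists_cyl_eq_Ioc hβ w
    have : cyl β (e :: w) = Ioc 0 1 ∩ (β * ·) ⁻¹' ((· - (e : ℝ)) ⁻¹' Ioc a b) := by
      ext x
      rw [mem_cyl_cons, hw]
      rfl
    rw [this, preimage_sub_const_Ioc, preimage_const_mul_Ioc₀ _ _ hβ, Ioc_inter_Ioc]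
    exact ⟨_, _, rfl⟩

lemma exists_isGreatest_cyl (hβ : 0 < β) {w : List ℤ} (hw : Admissible β w) :
    ∃ x, IsGreatest (cyl β w) x := by
  obtain ⟨a, b, hab⟩ := exists_cyl_eq_Ioc hβ w
  rw [Admissible, hab, nonempty_Ioc] at hw
  exact ⟨b, hab ▸ isGreatest_Ioc hw⟩

lemma iterate_sub_iterate_of_mem_cyl : ∀ {w : List ℤ} {x y : ℝ}, x ∈ cyl β w → y ∈ cyl β w →
    (Tbeta β)^[w.length] y - (Tbeta β)^[w.length] x = β ^ w.length * (y - x)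
  | [], _, _, _, _ => by simp
  | _ :: _, _, _, hx, hy => by
    rw [List.length_cons, Function.iterate_succ_apply, Function.iterate_succ_apply,
      Tbeta_eq_of_mem_cyl_cons hx, Tbeta_eq_of_mem_cyl_cons hy,
      iterate_sub_iterate_of_mem_cyl (mem_cyl_cons.1 hx).2 (mem_cyl_cons.1 hy).2]
    ring

lemma mem_cyl_of_iterate_add_le (hβ : 0 < β) : ∀ {w : List ℤ} {x y : ℝ}, x ∈ cyl β w →
    0 < (Tbeta β)^[w.length] x + β ^ w.length * (y - x) →
    (∀ j ≤ w.length, (Tbeta β)^[j] x + β ^ j * (y - x) ≤ 1) → y ∈ cyl β w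
  | [], x, y, _, hpos, hle => by
    rw [cyl_nil]
    have h₁ := hle 0 le_rfl
    simp only [List.length_nil, Function.iterate_zero_apply, pow_zero, one_mul] at hpos h₁
    constructor <;> linarith
  | e :: w, x, y, hx, hpos, hle => by
    have hTx := Tbeta_eq_of_mem_cyl_cons hx
    obtain ⟨⟨hx₀, -⟩, hx'⟩ := mem_cyl_cons.1 hx
    have hy' : β * y - e ∈ cyl β w := by
      refine mem_cyl_of_iterate_add_le hβ hx' ?_ fun j hj => ?_
      · convert hpos using 1
        rw [List.length_cons, Function.iterate_succ_apply, hTx]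
        ring
      · convert hle (j + 1) (by simpa using hj) using 1
        rw [Function.iterate_succ_apply, hTx]
        ring
    have he : (0 : ℝ) ≤ e := by
      have : (-1 : ℝ) < e := by linarith [(cyl_subset_Ioc β w hx').2, mul_pos hβ hx₀]
      exact_mod_cast (show (-1 : ℤ) < e by exact_mod_cast this)
    have hy₀ : 0 < β * y := by linarith [(cyl_subset_Ioc β w hy').1]
    refine mem_cyl_cons.2 ⟨⟨pos_of_mul_pos_right hy₀ hβ.le, ?_⟩, hy'⟩
    simpa using hle 0 (Nat.zero_le _)

lemma cyl_eq_Ioc_of_isGreatest (hβ : 0 < β) {w : List ℤ} (hx : IsGreatest (cyl β w) x) :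
    cyl β w = Ioc (x - (Tbeta β)^[w.length] x / β ^ w.length) x := by
  have hβn : 0 < β ^ w.length := pow_pos hβ _
  ext y
  rw [mem_Ioc, sub_lt_comm, lt_div_iff₀ hβn]
  constructor
  · intro hy
    have hT := iterate_sub_iterate_of_mem_cyl hx.1 hy
    have hTy := (iterate_Tbeta_mem_Ioc β hy.1 w.length).1
    exact ⟨by linarith, hx.2 hy⟩
  · rintro ⟨hxy, hyx⟩
    refine mem_cyl_of_iterate_add_le hβ hx.1 (by linarith) fun j _ => ?_
    have : β ^ j * (y - x) ≤ 0 := mul_nonpos_of_nonneg_of_nonpos (by positivity) (by linarith)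
    linarith [(iterate_Tbeta_mem_Ioc β hx.1.1 j).2]

lemma len_cyl_of_isGreatest (hβ : 0 < β) {w : List ℤ} (hx : IsGreatest (cyl β w) x) :
    len (cyl β w) = (Tbeta β)^[w.length] x / β ^ w.length := by
  have : 0 ≤ (Tbeta β)^[w.length] x / β ^ w.length :=
    div_nonneg (iterate_Tbeta_mem_Ioc β hx.1.1 _).1.le (by positivity)
  rw [cyl_eq_Ioc_of_isGreatest hβ hx, len, Real.volume_Ioc, sub_sub_cancel,
    ENNReal.toReal_ofReal this]

/-- Otherwise all the constraints `T^j x ≤ 1` are slack, and `x` can be pushed to the right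
inside the cylinder. -/
lemma exists_iterate_eq_one_of_isGreatest (hβ : 0 < β) {w : List ℤ}
    (hx : IsGreatest (cyl β w) x) : ∃ j ≤ w.length, (Tbeta β)^[j] x = 1 := by
  by_contra! hne
  have hslack : ∀ᶠ δ in 𝓝 (0 : ℝ), ∀ j ∈ Finset.range (w.length + 1),
      (Tbeta β)^[j] x + β ^ j * δ ≤ 1 := by
    refine (Finset.eventually_all _).2 fun j hj => ?_
    have hlt : (Tbeta β)^[j] x < 1 := lt_of_le_of_ne (iterate_Tbeta_mem_Ioc β hx.1.1 j).2
      (hne j (Finset.mem_range_succ_iff.1 hj))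
    exact ((by fun_prop : Continuous fun δ : ℝ => (Tbeta β)^[j] x + β ^ j * δ).tendsto' 0
      ((Tbeta β)^[j] x) (by simp)).eventually_le_const hlt
  obtain ⟨δ, hδ, hδ₀⟩ := ((hslack.filter_mono nhdsWithin_le_nhds).and self_mem_nhdsWithin).exists
    (f := 𝓝[>] (0 : ℝ))
  have hmem : x + δ ∈ cyl β w := by
    refine mem_cyl_of_iterate_add_le hβ hx.1 ?_ fun j hj => ?_
    · have := (iterate_Tbeta_mem_Ioc β hx.1.1 w.length).1
      have : 0 < β ^ w.length * δ := mul_pos (by positivity) hδ₀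
      linarith
    · simpa using hδ j (Finset.mem_range_succ_iff.2 hj)
  linarith [hx.2 hmem, show (0 : ℝ) < δ from hδ₀]

lemma isGreatest_cyl_estarWord (β : ℝ) (n : ℕ) : IsGreatest (cyl β (estarWord β n)) 1 := by
  refine ⟨⟨⟨one_pos, le_rfl⟩, fun j hj => ?_⟩, fun y hy => hy.1.2⟩
  rw [List.getD_eq_getElem _ _ hj]
  simp [estarWord]

lemma eps_eq_zero_iff (hβ : 0 < β) (hx : x ∈ Ioc (0 : ℝ) 1) (j : ℕ) :
    eps β x j = 0 ↔ β * (Tbeta β)^[j] x ≤ 1 := by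
  have := mul_pos hβ (iterate_Tbeta_mem_Ioc β hx j).1
  rw [eps_eq_eps_iterate, eps_zero_eq_iff, Int.cast_zero, sub_zero]
  exact ⟨fun h => h.2, fun h => ⟨this, h⟩⟩

lemma iterate_eq_pow_mul_of_eps_eq_zero : ∀ {k : ℕ}, (∀ j < k, eps β x j = 0) →
    (Tbeta β)^[k] x = β ^ k * x
  | 0, _ => by simp
  | k + 1, h => by
    rw [Function.iterate_succ_apply', Tbeta_eq_sub_eps, ← eps_eq_eps_iterate, h k (by omega),
      iterate_eq_pow_mul_of_eps_eq_zero fun j hj => h j (by omega)]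
    push_cast
    ring

lemma forall_eps_eq_zero_iff (hβ : 1 < β) (hx : x ∈ Ioc (0 : ℝ) 1) :
    ∀ k : ℕ, (∀ j < k, eps β x j = 0) ↔ β ^ k * x ≤ 1
  | 0 => by simpa using hx.2
  | k + 1 => by
    rw [Nat.forall_lt_succ_right]
    constructor
    · rintro ⟨hk, h₀⟩
      rw [eps_eq_zero_iff (by linarith) hx, iterate_eq_pow_mul_of_eps_eq_zero hk] at h₀
      rwa [pow_succ', mul_assoc]
    · intro h
      have hk : ∀ j < k, eps β x j = 0 := (forall_eps_eq_zero_iff hβ hx k).2 <|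
        le_trans (mul_le_mul_of_nonneg_right (pow_le_pow_right₀ hβ.le k.le_succ) hx.1.le) h
      rw [eps_eq_zero_iff (by linarith) hx, iterate_eq_pow_mul_of_eps_eq_zero hk, ← mul_assoc,
        ← pow_succ']
      exact ⟨hk, h⟩

lemma tseq_spec (hβ : 1 < β) (m : ℕ) :
    β ^ tseq β m * (Tbeta β)^[m] 1 ≤ 1 ∧ 1 < β ^ (tseq β m + 1) * (Tbeta β)^[m] 1 := by
  set u := (Tbeta β)^[m] 1
  have hu : u ∈ Ioc (0 : ℝ) 1 := iterate_Tbeta_mem_Ioc β ⟨one_pos, le_rfl⟩ m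
  have hS : {k : ℕ | ∀ j < k, eps β 1 (m + j) = 0} = {k : ℕ | β ^ k * u ≤ 1} := by
    ext k
    rw [mem_ofPred_eq, mem_ofPred_eq, ← forall_eps_eq_zero_iff hβ hu]
    simp only [u, eps_iterate, add_comm]
  obtain ⟨K, hK⟩ := pow_unbounded_of_one_lt u⁻¹ hβ
  have hbdd : BddAbove {k : ℕ | β ^ k * u ≤ 1} := by
    refine ⟨K, fun k (hk : β ^ k * u ≤ 1) => ?_⟩
    have : β ^ k < β ^ K := by
      rw [inv_lt_iff_one_lt_mul₀ hu.1] at hK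
      nlinarith [hu.1]
    exact ((pow_lt_pow_iff_right₀ hβ).1 this).le
  have hsucc := notMem_of_csSup_lt (Nat.lt_succ_self _) hbdd
  rw [tseq, hS]
  exact ⟨Nat.sSup_mem ⟨0, by simpa using hu.2⟩ hbdd, not_le.1 hsucc⟩

lemma one_lt_pow_Gam_succ_mul_iterate_one (hβ : 1 < β) {m n : ℕ} (hmn : m ≤ n) :
    1 < β ^ (Gam β n + 1) * (Tbeta β)^[m] 1 := by
  rcases Nat.eq_zero_or_pos m with rfl | hm
  · simpa using one_lt_pow₀ hβ (Nat.succ_ne_zero _)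
  · have ht : tseq β m ≤ Gam β n := Finset.le_sup (Finset.mem_Icc.2 ⟨hm, hmn⟩)
    calc 1 < β ^ (tseq β m + 1) * (Tbeta β)^[m] 1 := (tseq_spec hβ m).2
      _ ≤ β ^ (Gam β n + 1) * (Tbeta β)^[m] 1 :=
        mul_le_mul_of_nonneg_right (pow_le_pow_right₀ hβ.le (by omega))
          (iterate_Tbeta_mem_Ioc β ⟨one_pos, le_rfl⟩ m).1.le

lemma zpow_neg_add_le_div (hβ : 0 < β) {u : ℝ} (n k : ℕ) (h : 1 ≤ β ^ k * u) :
    β ^ (-((n : ℤ) + k)) ≤ u / β ^ n := by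
  rw [← Nat.cast_add, zpow_neg, zpow_natCast, pow_add, le_div_iff₀ (by positivity),
    mul_inv, mul_comm, ← mul_assoc, mul_inv_cancel₀ (by positivity), one_mul,
    inv_le_iff_one_le_mul₀' (by positivity)]
  exact h

lemma div_le_zpow_neg_add (hβ : 0 < β) {u : ℝ} (n k : ℕ) (h : β ^ k * u ≤ 1) :
    u / β ^ n ≤ β ^ (-((n : ℤ) + k)) := by
  rw [← Nat.cast_add, zpow_neg, zpow_natCast, pow_add, div_le_iff₀ (by positivity),
    mul_inv, mul_comm, ← mul_assoc, mul_inv_cancel₀ (by positivity), one_mul,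
    ← one_div, le_div_iff₀ (by positivity), mul_comm]
  exact h

end

theorem len_cyl_bounds_general (β : ℝ) (hβ : 1 < β) (w : List ℤ)
    (hadm : Admissible β w) :
    (β ^ (-((w.length : ℤ) + (Gam β w.length : ℤ) + 1)) ≤ len (cyl β w) ∧
        len (cyl β w) ≤ β ^ (-(w.length : ℤ))) ∧
      (β ^ (-((w.length : ℤ) + (tseq β w.length : ℤ) + 1))
          ≤ len (cyl β (estarWord β w.length)) ∧
        len (cyl β (estarWord β w.length))
          ≤ β ^ (-((w.length : ℤ) + (tseq β w.length : ℤ)))) := by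
  have hβ₀ : 0 < β := by linarith
  set n := w.length
  obtain ⟨x, hx⟩ := exists_isGreatest_cyl hβ₀ hadm
  obtain ⟨j, hjn, hj⟩ := exists_iterate_eq_one_of_isGreatest hβ₀ hx
  have hTx : (Tbeta β)^[n] x = (Tbeta β)^[n - j] 1 := by
    rw [← hj, ← Function.iterate_add_apply, Nat.sub_add_cancel hjn]
  have hstar := len_cyl_of_isGreatest hβ₀ (isGreatest_cyl_estarWord β n)
  simp only [estarWord, List.length_map, List.length_range] at hstar
  rw [len_cyl_of_isGreatest hβ₀ hx, hTx, estarWord, hstar]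
  have hΓ := zpow_neg_add_le_div hβ₀ n _ (one_lt_pow_Gam_succ_mul_iterate_one hβ (n.sub_le j)).le
  have hle := div_le_zpow_neg_add hβ₀ n 0
    (by simpa using (iterate_Tbeta_mem_Ioc β ⟨one_pos, le_rfl⟩ (n - j)).2)
  have ht₁ := zpow_neg_add_le_div hβ₀ n _ (tseq_spec hβ n).2.le
  have ht₂ := div_le_zpow_neg_add hβ₀ n _ (tseq_spec hβ n).1
  push_cast [← add_assoc] at hΓ hle ht₁
  exact ⟨⟨hΓ, by simpa using hle⟩, ht₁, ht₂⟩

/-- For every admissible word `(ε_1,…,ε_n)` with `n ≥ 1`,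
`β^{−(n+Γ_n+1)} ≤ |I(ε_1,…,ε_n)| ≤ β^{−n}`; in particular for the word `(ε*_1,…,ε*_n)`
one has the sharper bounds `β^{−(n+t_n+1)} ≤ |I(ε*_1,…,ε*_n)| ≤ β^{−(n+t_n)}`. -/
theorem len_cyl_bounds (β : ℝ) (hβ : 1 < β) (w : List ℤ)
    (hn : 1 ≤ w.length) (hadm : Admissible β w) :
    (β ^ (-((w.length : ℤ) + (Gam β w.length : ℤ) + 1)) ≤ len (cyl β w) ∧
        len (cyl β w) ≤ β ^ (-(w.length : ℤ))) ∧
      (β ^ (-((w.length : ℤ) + (tseq β w.length : ℤ) + 1))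
          ≤ len (cyl β (estarWord β w.length)) ∧
        len (cyl β (estarWord β w.length))
          ≤ β ^ (-((w.length : ℤ) + (tseq β w.length : ℤ)))) :=
  len_cyl_bounds_general β hβ w hadm
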